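/- Let Y be a reflexive subspace of a Banach space X. If the quotient X/Y has the p-sequentially Right* property, then X has the p-sequentially Right* property. -/

import Mathlib

open Filter Topology NormedSpace Bornology
open scoped ENNReal ContinuousMap ZeroAtInfty

/-- A sequence is weakly null. -/
def WeaklyNull {X : Type*} [NormedAddCommGroup X] [NormedSpace ℝ X] (x : ℕ → X) : Prop :=
  ∀ f : StrongDual ℝ X, Tendsto (fun n => f (x n)) atTop (𝓝 0)

/-- A sequence is weakly `p`-summable; for `p = ∞` this means weakly null. -/
def WeaklyPSummable {X : Type*} [NormedAddCommGroup X] [NormedSpace ℝ X] (p : ℝ≥0∞)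
    (x : ℕ → X) : Prop :=
  if p = ∞ then WeaklyNull x else ∀ f : StrongDual ℝ X, Memℓp (fun n => f (x n)) p

/-- A Dunford-Pettis subset of a Banach space: a bounded set on which every weakly null
sequence of functionals converges uniformly to zero. -/
def IsDunfordPettisSet {X : Type*} [NormedAddCommGroup X] [NormedSpace ℝ X] (A : Set X) : Prop :=
  IsBounded A ∧ ∀ f : ℕ → StrongDual ℝ X, WeaklyNull f →
    Tendsto (fun n => ⨆ a : A, |f n a.1|) atTop (𝓝 0)

/-- A `p`-Right null sequence: weakly `p`-summable and a Dunford-Pettis set. -/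
def PRightNull {X : Type*} [NormedAddCommGroup X] [NormedSpace ℝ X] (p : ℝ≥0∞)
    (x : ℕ → X) : Prop :=
  WeaklyPSummable p x ∧ IsDunfordPettisSet (Set.range x)

/-- A `p`-Right subset of the dual: every `p`-Right null sequence in `X` converges to `0`
uniformly on `K`. -/
def IsPRightSet {X : Type*} [NormedAddCommGroup X] [NormedSpace ℝ X] (p : ℝ≥0∞)
    (K : Set (StrongDual ℝ X)) : Prop :=
  IsBounded K ∧ ∀ x : ℕ → X, PRightNull p x →
    Tendsto (fun n => ⨆ f : K, |f.1 (x n)|) atTop (𝓝 0)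

/-- A `p`-Right* subset of `X`: every `p`-Right null sequence in `X*` converges to `0`
uniformly on `K`. -/
def IsPRightStarSet {X : Type*} [NormedAddCommGroup X] [NormedSpace ℝ X] (p : ℝ≥0∞)
    (K : Set X) : Prop :=
  IsBounded K ∧ ∀ f : ℕ → StrongDual ℝ X, PRightNull p f →
    Tendsto (fun n => ⨆ a : K, |f n a.1|) atTop (𝓝 0)

/-- A `p`-(V) subset of the dual. -/
def IsPVSet {X : Type*} [NormedAddCommGroup X] [NormedSpace ℝ X] (p : ℝ≥0∞)
    (K : Set (StrongDual ℝ X)) : Prop :=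
  IsBounded K ∧ ∀ x : ℕ → X, WeaklyPSummable p x →
    Tendsto (fun n => ⨆ f : K, |f.1 (x n)|) atTop (𝓝 0)

/-- A `p`-(V*) subset of `X`. -/
def IsPVStarSet {X : Type*} [NormedAddCommGroup X] [NormedSpace ℝ X] (p : ℝ≥0∞)
    (K : Set X) : Prop :=
  IsBounded K ∧ ∀ f : ℕ → StrongDual ℝ X, WeaklyPSummable p f →
    Tendsto (fun n => ⨆ a : K, |f n a.1|) atTop (𝓝 0)

/-- A Dunford-Pettis `p`-convergent operator maps `p`-Right null sequences to norm
null sequences. -/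
def DPpConvergent {X Y : Type*} [NormedAddCommGroup X] [NormedSpace ℝ X] [NormedAddCommGroup Y]
    [NormedSpace ℝ Y] (p : ℝ≥0∞) (T : X →L[ℝ] Y) : Prop :=
  ∀ x : ℕ → X, PRightNull p x → Tendsto (fun n => ‖T (x n)‖) atTop (𝓝 0)

/-- The adjoint of a bounded operator between normed spaces. -/
noncomputable def adjointOp {X Y : Type*} [NormedAddCommGroup X] [NormedSpace ℝ X]
    [NormedAddCommGroup Y] [NormedSpace ℝ Y] (T : X →L[ℝ] Y) : StrongDual ℝ Y →L[ℝ] StrongDual ℝ X :=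
  (ContinuousLinearMap.compL ℝ X Y ℝ).flip T

/-- Weak convergence of a sequence. -/
def WeaklyConvTo {X : Type*} [NormedAddCommGroup X] [NormedSpace ℝ X] (x : ℕ → X) (a : X) : Prop :=
  ∀ f : StrongDual ℝ X, Tendsto (fun n => f (x n)) atTop (𝓝 (f a))

/-- A relatively weakly compact set (sequentially): every sequence in `A` has a weakly
convergent subsequence with limit in the space. -/
def RelWeaklyCompact {X : Type*} [NormedAddCommGroup X] [NormedSpace ℝ X] (A : Set X) : Prop :=
  ∀ x : ℕ → X, (∀ n, x n ∈ A) →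
    ∃ a : X, ∃ φ : ℕ → ℕ, StrictMono φ ∧ WeaklyConvTo (fun n => x (φ n)) a

/-- A relatively weakly `q`-compact set: every sequence in `A` has a weakly `q`-convergent
subsequence with limit in the space. -/
def RelWeaklyQCompact {X : Type*} [NormedAddCommGroup X] [NormedSpace ℝ X] (q : ℝ≥0∞)
    (A : Set X) : Prop :=
  ∀ x : ℕ → X, (∀ n, x n ∈ A) →
    ∃ a : X, ∃ φ : ℕ → ℕ, StrictMono φ ∧ WeaklyPSummable q (fun n => x (φ n) - a)

/-- The `p`-sequentially Right property: every `p`-Right subset of the dual is relatively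
weakly compact. -/
def PSR (p : ℝ≥0∞) (X : Type*) [NormedAddCommGroup X] [NormedSpace ℝ X] : Prop :=
  ∀ K : Set (StrongDual ℝ X), IsPRightSet p K → RelWeaklyCompact K

/-- The `p`-sequentially Right* property: every `p`-Right* subset is relatively weakly
compact. -/
def PSRStar (p : ℝ≥0∞) (X : Type*) [NormedAddCommGroup X] [NormedSpace ℝ X] : Prop :=
  ∀ K : Set X, IsPRightStarSet p K → RelWeaklyCompact K

section Aux

open TopologicalSpace Set

lemma adjointOp_apply {X Y : Type*} [NormedAddCommGroup X] [NormedSpace ℝ X]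
    [NormedAddCommGroup Y] [NormedSpace ℝ Y] (T : X →L[ℝ] Y) (g : StrongDual ℝ Y) (x : X) :
    adjointOp T g x = g (T x) := rfl

variable {X : Type*} [NormedAddCommGroup X] [NormedSpace ℝ X]

lemma aux_bddAbove {s : Set X} (hs : IsBounded s) (f : StrongDual ℝ X) :
    BddAbove (Set.range fun a : s => |f a.1|) := by
  obtain ⟨C, hC⟩ := isBounded_iff_forall_norm_le.1 hs
  refine ⟨‖f‖ * C, ?_⟩
  rintro t ⟨a, rfl⟩
  calc |f a.1| = ‖f a.1‖ := (Real.norm_eq_abs _).symm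
    _ ≤ ‖f‖ * ‖a.1‖ := f.le_opNorm _
    _ ≤ ‖f‖ * C := mul_le_mul_of_nonneg_left (hC _ a.2) (norm_nonneg f)

/-- Separation of a point from a closed subspace. -/
lemma aux_sep (M : Submodule ℝ X) (hM : IsClosed (M : Set X)) {x : X} (hx : x ∉ M) :
    ∃ f : StrongDual ℝ X, (∀ m ∈ M, f m = 0) ∧ f x = 1 := by
  obtain ⟨f, u, hfM, hux⟩ := geometric_hahn_banach_closed_point M.convex hM hx
  have hM0 : ∀ m ∈ M, f m = 0 := by
    intro m hm
    by_contra hne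
    have h1 : ((u + 1) / f m) * f m < u := by
      have := hfM (((u + 1) / f m) • m) (M.smul_mem _ hm)
      simpa [smul_eq_mul] using this
    rw [div_mul_cancel₀ _ hne] at h1
    linarith
  have hu0 : (0:ℝ) < u := by
    have := hfM 0 M.zero_mem
    simpa using this
  have hfx : f x ≠ 0 := ne_of_gt (hu0.trans hux)
  refine ⟨(f x)⁻¹ • f, fun m hm => ?_, ?_⟩
  · simp [hM0 m hm]
  · simp [inv_mul_cancel₀ hfx]

/-- A linear bounded functional on `X*` that kills the annihilator of a "reflexive" subspace
`Y` is represented by a point of `Y`. -/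
lemma aux_repr (Y : Submodule ℝ X)
    (hrefl : Function.Surjective (NormedSpace.inclusionInDoubleDual ℝ Y))
    (r : StrongDual ℝ X → ℝ)
    (hadd : ∀ f g : StrongDual ℝ X, r (f + g) = r f + r g)
    (hsmul : ∀ (c : ℝ) (f : StrongDual ℝ X), r (c • f) = c * r f)
    {Cr : ℝ} (hbdd : ∀ f, |r f| ≤ Cr * ‖f‖)
    (hkill : ∀ f : StrongDual ℝ X, (∀ v ∈ Y, f v = 0) → r f = 0) :
    ∃ y : X, y ∈ Y ∧ ∀ h : StrongDual ℝ X, r h = h y := by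
  have hagree : ∀ f₁ f₂ : StrongDual ℝ X, (∀ v : Y, f₁ v = f₂ v) → r f₁ = r f₂ := by
    intro f₁ f₂ hf
    have h0 : r (f₁ - f₂) = 0 := by
      refine hkill _ (fun v hv => ?_)
      have := hf ⟨v, hv⟩
      simp only [ContinuousLinearMap.sub_apply]
      simpa using sub_eq_zero_of_eq this
    have heq : f₂ + (f₁ - f₂) = f₁ := by abel
    have := hadd f₂ (f₁ - f₂)
    rw [heq, h0] at this
    linarith
  have extex : ∀ g : StrongDual ℝ ↥Y, ∃ G : StrongDual ℝ X, (∀ v : Y, G v = g v) ∧ ‖G‖ = ‖g‖ :=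
    fun g => exists_extension_norm_eq Y g
  choose ext hext hnorm using extex
  let Ψlin : StrongDual ℝ ↥Y →ₗ[ℝ] ℝ :=
    { toFun := fun g => r (ext g)
      map_add' := by
        intro g₁ g₂
        have h1 : r (ext (g₁ + g₂)) = r (ext g₁ + ext g₂) := by
          refine hagree _ _ (fun v => ?_)
          simp [hext]
        simp only [h1, hadd]
      map_smul' := by
        intro c g
        have h1 : r (ext (c • g)) = r (c • ext g) := by
          refine hagree _ _ (fun v => ?_)
          simp [hext]
        simp only [h1, hsmul, smul_eq_mul, RingHom.id_apply] }
  let Ψ : StrongDual ℝ (StrongDual ℝ ↥Y) := Ψlin.mkContinuous Cr (fun g => show ‖Ψlin g‖ ≤ Cr * ‖g‖ by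
    have h1 : ‖Ψlin g‖ = |r (ext g)| := rfl
    rw [h1, ← hnorm g]
    exact hbdd _)
  obtain ⟨y, hy⟩ := hrefl Ψ
  have hyv : ∀ g : StrongDual ℝ ↥Y, g y = Ψ g := by
    intro g
    have := congrArg (fun Φ : StrongDual ℝ (StrongDual ℝ ↥Y) => Φ g) hy
    simpa [NormedSpace.dual_def] using this
  refine ⟨(y : X), y.2, fun h => ?_⟩
  have h1 : r h = r (ext (h.comp Y.subtypeL)) := by
    refine (hagree _ _ (fun v => ?_)).symm
    simp [hext]
  rw [h1]
  have h2 : r (ext (h.comp Y.subtypeL)) = Ψ (h.comp Y.subtypeL) := rfl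
  rw [h2, ← hyv]
  simp

/-- Limits along an ultrafilter of a bounded real sequence. -/
lemma aux_ulim (U : Ultrafilter ℕ) (fn : ℕ → ℝ) {M : ℝ} (h : ∀ n, |fn n| ≤ M) :
    ∃ t : ℝ, Tendsto fn (U : Filter ℕ) (𝓝 t) := by
  have hle : (Ultrafilter.map fn U : Filter ℝ) ≤ 𝓟 (Set.Icc (-M) M) := by
    rw [le_principal_iff]
    exact Filter.mem_map.2 (Filter.univ_mem' (fun n => abs_le.1 (h n)))
  obtain ⟨t, _, ht⟩ := isCompact_Icc.ultrafilter_le_nhds (Ultrafilter.map fn U) hle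
  refine ⟨t, ?_⟩
  rwa [Ultrafilter.coe_map] at ht

set_option synthInstance.maxHeartbeats 1000000 in
set_option maxHeartbeats 1000000 in
/-- The dual of a separable closed subspace of a "reflexive" space is separable. -/
lemma aux_dual_sep (Y : Submodule ℝ X)
    (hrefl : Function.Surjective (NormedSpace.inclusionInDoubleDual ℝ Y))
    (Z : Submodule ℝ X) (hZY : Z ≤ Y) (hZc : IsClosed (Z : Set X))
    (hZsep : TopologicalSpace.IsSeparable (Z : Set X)) :
    TopologicalSpace.SeparableSpace (StrongDual ℝ ↥Z) := by
  haveI : TopologicalSpace.SeparableSpace ↥Z := hZsep.separableSpace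
  haveI : Nonempty ↥Z := ⟨0⟩
  obtain ⟨d, hd⟩ := TopologicalSpace.exists_dense_seq ↥Z
  have hgex : ∀ k, ∃ g : StrongDual ℝ ↥Z, ‖g‖ ≤ 1 ∧ g (d k) = ‖d k‖ := by
    intro k
    by_cases hk : d k = 0
    · exact ⟨0, by simp [ContinuousLinearMap.opNorm_zero], by simp [hk]⟩
    · obtain ⟨g, hg1, hg2⟩ := exists_dual_vector ℝ (d k) (norm_ne_zero_iff.2 hk)
      exact ⟨g, le_of_eq hg1, hg2⟩
  choose g hg1 hg2 using hgex
  have hM : (Submodule.span ℝ (Set.range g)).topologicalClosure = ⊤ := by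
    by_contra hne
    obtain ⟨ζ0, hζ0⟩ : ∃ ζ0 : StrongDual ℝ ↥Z,
        ζ0 ∉ (Submodule.span ℝ (Set.range g)).topologicalClosure := by
      by_contra hall
      push_neg at hall
      exact hne (Submodule.eq_top_iff'.2 hall)
    obtain ⟨Φ, hΦM, hΦζ0⟩ := aux_sep (X := StrongDual ℝ ↥Z) _ (Submodule.isClosed_topologicalClosure _) hζ0
    let ι : ↥Z →L[ℝ] ↥Y := (Submodule.inclusion hZY).mkContinuous 1 (fun v => by
      rw [one_mul]
      exact le_of_eq (by rw [Submodule.coe_norm, Submodule.coe_norm, Submodule.coe_inclusion]))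
    let Ψ : StrongDual ℝ (StrongDual ℝ ↥Y) := Φ.comp (adjointOp ι)
    obtain ⟨y, hy⟩ := hrefl Ψ
    have hyv : ∀ f : StrongDual ℝ ↥Y, f y = Φ (f.comp ι) := by
      intro f
      have := congrArg (fun G : StrongDual ℝ (StrongDual ℝ ↥Y) => G f) hy
      show f y = Φ (adjointOp ι f)
      simpa [NormedSpace.dual_def, Ψ, adjointOp_apply] using this
    have hιv : ∀ v : ↥Z, ((ι v : ↥Y) : X) = (v : X) := fun v => rfl
    have hyZ : (y : X) ∈ Z := by
      by_contra hny
      obtain ⟨f₀, hf₀Z, hf₀y⟩ := aux_sep Z hZc hny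
      have h1 : ((f₀.comp Y.subtypeL).comp ι) = 0 := by
        ext v
        show f₀ ((ι v : ↥Y) : X) = 0
        rw [hιv v]
        exact hf₀Z _ v.2
      have h2 := hyv (f₀.comp Y.subtypeL)
      rw [h1] at h2
      simp only [map_zero] at h2
      have h3 : (f₀.comp Y.subtypeL) y = f₀ (y : X) := rfl
      rw [h3, hf₀y] at h2
      exact one_ne_zero h2
    set z' : ↥Z := ⟨(y : X), hyZ⟩ with hz'def
    have hΦeval : ∀ ζ : StrongDual ℝ ↥Z, Φ ζ = ζ z' := by
      intro ζ
      obtain ⟨hjh, hext, -⟩ := exists_extension_norm_eq Z ζ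
      have h2 : ((hjh.comp Y.subtypeL).comp ι) = ζ := by
        ext v
        show hjh ((ι v : ↥Y) : X) = ζ v
        rw [hιv v]
        exact hext v
      have h3 := hyv (hjh.comp Y.subtypeL)
      rw [h2] at h3
      rw [← h3]
      show hjh (y : X) = ζ z'
      exact hext z'
    have hz0 : ∀ k, g k z' = 0 := by
      intro k
      rw [← hΦeval (g k)]
      exact hΦM _ ((Submodule.span ℝ (Set.range g)).le_topologicalClosure
        (Submodule.subset_span ⟨k, rfl⟩))
    have hz'0 : z' = 0 := by
      by_contra hz'
      have hpos : 0 < ‖z'‖ := norm_pos_iff.2 hz'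
      obtain ⟨k, hk⟩ := Metric.denseRange_iff.1 hd z' (‖z'‖ / 4) (by positivity)
      have h1 : ‖d k‖ ≤ ‖d k - z'‖ := by
        have e1 : (‖d k‖ : ℝ) = g k (d k - z') := by
          rw [map_sub, hz0, sub_zero, hg2]
        rw [e1]
        calc g k (d k - z') ≤ |g k (d k - z')| := le_abs_self _
          _ = ‖g k (d k - z')‖ := (Real.norm_eq_abs _).symm
          _ ≤ ‖g k‖ * ‖d k - z'‖ := (g k).le_opNorm _
          _ ≤ 1 * ‖d k - z'‖ := mul_le_mul_of_nonneg_right (hg1 k) (norm_nonneg _)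
          _ = ‖d k - z'‖ := one_mul _
      have h2 : ‖z'‖ ≤ 2 * ‖d k - z'‖ := by
        have e2 := norm_add_le (z' - d k) (d k)
        rw [sub_add_cancel] at e2
        have e3 : ‖z' - d k‖ = ‖d k - z'‖ := norm_sub_rev _ _
        linarith
      have h3 : ‖d k - z'‖ < ‖z'‖ / 4 := by
        rw [← dist_eq_norm, dist_comm]
        exact hk
      linarith
    rw [hΦeval ζ0, hz'0] at hΦζ0
    simp at hΦζ0
  have h1 : IsSeparable
      ((Submodule.span ℝ (Set.range g) : Submodule ℝ (StrongDual ℝ ↥Z)) : Set (StrongDual ℝ ↥Z)) :=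
    (Set.countable_range g).isSeparable.span
  have h2 := h1.closure
  rw [← Submodule.topologicalClosure_coe, hM] at h2
  exact (TopologicalSpace.isSeparable_univ_iff).1 (by simpa using h2)

/-- Transfer of weak p-summability through an operator. -/
lemma aux_wps_comp {E F : Type*} [NormedAddCommGroup E] [NormedSpace ℝ E]
    [NormedAddCommGroup F] [NormedSpace ℝ F] {p : ℝ≥0∞} (T : E →L[ℝ] F) {x : ℕ → E}
    (hx : WeaklyPSummable p x) : WeaklyPSummable p (fun n => T (x n)) := by
  by_cases hp : p = ∞
  · rw [WeaklyPSummable, if_pos hp] at hx ⊢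
    exact fun f => hx (f.comp T)
  · rw [WeaklyPSummable, if_neg hp] at hx ⊢
    exact fun f => hx (f.comp T)

/-- Transfer of the Dunford-Pettis property of the range through an operator. -/
lemma aux_dp_comp {E F : Type*} [NormedAddCommGroup E] [NormedSpace ℝ E]
    [NormedAddCommGroup F] [NormedSpace ℝ F] (T : E →L[ℝ] F) {x : ℕ → E}
    (hx : IsDunfordPettisSet (Set.range x)) :
    IsDunfordPettisSet (Set.range fun n => T (x n)) := by
  obtain ⟨hb, hdp⟩ := hx
  obtain ⟨C, hC⟩ := isBounded_iff_forall_norm_le.1 hb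
  constructor
  · rw [isBounded_iff_forall_norm_le]
    refine ⟨‖T‖ * C, ?_⟩
    rintro _ ⟨m, rfl⟩
    exact (T.le_opNorm _).trans (mul_le_mul_of_nonneg_left (hC _ ⟨m, rfl⟩) (norm_nonneg T))
  · intro F hF
    have h1 := hdp (fun k => adjointOp T (F k)) (fun ξ => hF (ξ.comp (adjointOp T)))
    refine squeeze_zero (fun k => Real.iSup_nonneg fun a => abs_nonneg _) (fun k => ?_) h1
    refine Real.iSup_le ?_ (Real.iSup_nonneg fun b => abs_nonneg _)
    rintro ⟨a, m, rfl⟩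
    exact le_ciSup (aux_bddAbove hb (adjointOp T (F k))) (⟨x m, ⟨m, rfl⟩⟩ : Set.range x)

set_option synthInstance.maxHeartbeats 1000000 in
set_option maxHeartbeats 2000000 in
/-- Main lifting lemma: a bounded sequence whose `Y`-annihilator evaluations vanish, with `Y`
"reflexive", has a weakly convergent subsequence. -/
lemma aux_main_lift (Y : Submodule ℝ X) (hYc : IsClosed (Y : Set X))
    (hrefl : Function.Surjective (NormedSpace.inclusionInDoubleDual ℝ Y))
    (z : ℕ → X) {C : ℝ} (hC : ∀ n, ‖z n‖ ≤ C)
    (hnull : ∀ w : StrongDual ℝ X, (∀ v ∈ Y, w v = 0) → Tendsto (fun n => w (z n)) atTop (𝓝 0)) :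
    ∃ c : X, ∃ ψ : ℕ → ℕ, StrictMono ψ ∧
      ∀ h : StrongDual ℝ X, Tendsto (fun n => h (z (ψ n))) atTop (𝓝 (h c)) := by
  have hC0 : 0 ≤ C := (norm_nonneg (z 0)).trans (hC 0)
  set X₂ : Submodule ℝ X := (Submodule.span ℝ (Set.range z)).topologicalClosure with hX₂def
  have hzX₂ : ∀ n, z n ∈ X₂ :=
    fun n => (Submodule.span ℝ (Set.range z)).le_topologicalClosure
      (Submodule.subset_span ⟨n, rfl⟩)
  have hX₂c : IsClosed (X₂ : Set X) := Submodule.isClosed_topologicalClosure _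
  set Z : Submodule ℝ X := Y ⊓ X₂ with hZdef
  have hZc : IsClosed (Z : Set X) := by
    rw [hZdef, Submodule.coe_inf]
    exact hYc.inter hX₂c
  have habs : ∀ (h : StrongDual ℝ X) n, |h (z n)| ≤ ‖h‖ * C := by
    intro h n
    calc |h (z n)| = ‖h (z n)‖ := (Real.norm_eq_abs _).symm
      _ ≤ ‖h‖ * ‖z n‖ := h.le_opNorm _
      _ ≤ ‖h‖ * C := mul_le_mul_of_nonneg_left (hC n) (norm_nonneg h)
  -- Key claim: functionals vanishing on Z tend to zero along z
  have keyclaim : ∀ w : StrongDual ℝ X, (∀ v ∈ Z, w v = 0) →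
      Tendsto (fun n => w (z n)) atTop (𝓝 0) := by
    intro w hw
    by_contra hcon
    rw [Metric.tendsto_atTop] at hcon
    push_neg at hcon
    obtain ⟨ε, hε, hfreq⟩ := hcon
    obtain ⟨ψ, hψmono, hψ⟩ := extraction_of_frequently_atTop (P := fun n => ε ≤ |w (z n)|)
      (frequently_atTop'.2 fun N => by
        obtain ⟨n, hn1, hn2⟩ := hfreq (N + 1)
        refine ⟨n, by omega, ?_⟩
        rwa [Real.dist_eq, sub_zero] at hn2)
    set U : Ultrafilter ℕ := Ultrafilter.of atTop with hUdef
    have hUle : (U : Filter ℕ) ≤ atTop := Ultrafilter.of_le _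
    have hex : ∀ h : StrongDual ℝ X, ∃ t, Tendsto (fun n => h (z (ψ n))) (U : Filter ℕ) (𝓝 t) :=
      fun h => aux_ulim U _ (M := ‖h‖ * C) (fun n => habs h (ψ n))
    choose r hr using hex
    have hadd : ∀ f g : StrongDual ℝ X, r (f + g) = r f + r g := by
      intro f g
      refine tendsto_nhds_unique (hr (f + g)) ?_
      have := (hr f).add (hr g)
      simpa using this
    have hsmul : ∀ (c : ℝ) (f : StrongDual ℝ X), r (c • f) = c * r f := by
      intro c f
      refine tendsto_nhds_unique (hr (c • f)) ?_
      have := (hr f).const_mul c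
      simpa using this
    have hbdd : ∀ f : StrongDual ℝ X, |r f| ≤ C * ‖f‖ := by
      intro f
      have hmem : ∀ n, f (z (ψ n)) ∈ Set.Icc (-(‖f‖ * C)) (‖f‖ * C) :=
        fun n => abs_le.1 (habs f (ψ n))
      have := isClosed_Icc.mem_of_tendsto (hr f) (Eventually.of_forall hmem)
      have h2 : |r f| ≤ ‖f‖ * C := abs_le.2 ⟨this.1, this.2⟩
      linarith [h2, mul_comm ‖f‖ C]
    have hkill : ∀ f : StrongDual ℝ X, (∀ v ∈ Y, f v = 0) → r f = 0 := by
      intro f hf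
      refine tendsto_nhds_unique (hr f) ?_
      exact ((hnull f hf).comp hψmono.tendsto_atTop).mono_left hUle
    obtain ⟨y, hyY, hy⟩ := aux_repr Y hrefl r hadd hsmul hbdd hkill
    have hyX₂ : y ∈ X₂ := by
      by_contra hyn
      obtain ⟨f, hfM, hfy⟩ := aux_sep X₂ hX₂c hyn
      have h0 : r f = 0 := by
        refine tendsto_nhds_unique (hr f) ?_
        have : (fun n => f (z (ψ n))) = fun _ => (0 : ℝ) :=
          funext fun n => hfM _ (hzX₂ (ψ n))
        rw [this]
        exact tendsto_const_nhds
      rw [hy f, hfy] at h0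
      exact one_ne_zero h0
    have hyZ : y ∈ Z := Submodule.mem_inf.2 ⟨hyY, hyX₂⟩
    have h0 : w y = 0 := hw y hyZ
    have hclosed : IsClosed {t : ℝ | ε ≤ |t|} := isClosed_le continuous_const continuous_abs
    have := hclosed.mem_of_tendsto (hr w) (Eventually.of_forall fun n => hψ n)
    rw [hy w, h0] at this
    simp only [Set.mem_setOf_eq, abs_zero] at this
    linarith
  -- Z is separable, hence so is its dual
  have hZsep : TopologicalSpace.IsSeparable (Z : Set X) := by
    have h1 : TopologicalSpace.IsSeparable (X₂ : Set X) := by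
      rw [hX₂def, Submodule.topologicalClosure_coe]
      exact ((Set.countable_range z).isSeparable.span).closure
    refine h1.mono ?_
    rw [hZdef, Submodule.coe_inf]
    exact Set.inter_subset_right
  haveI hdsep := aux_dual_sep Y hrefl Z inf_le_left hZc hZsep
  haveI : Nonempty (StrongDual ℝ ↥Z) := ⟨0⟩
  obtain ⟨ζ, hζ⟩ := TopologicalSpace.exists_dense_seq (StrongDual ℝ ↥Z)
  have hextex : ∀ k, ∃ G : StrongDual ℝ X, (∀ v : Z, G v = ζ k v) ∧ ‖G‖ = ‖ζ k‖ :=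
    fun k => exists_extension_norm_eq Z (ζ k)
  choose gex hgex hgexn using hextex
  -- diagonal extraction
  set S : Set (ℕ → ℝ) := Set.pi Set.univ (fun k => Set.Icc (-(‖gex k‖ * C)) (‖gex k‖ * C))
    with hSdef
  have hScomp : IsCompact S := isCompact_univ_pi fun k => isCompact_Icc
  have hseq : IsSeqCompact S := hScomp.isSeqCompact
  set v : ℕ → (ℕ → ℝ) := fun n k => gex k (z n) with hvdef
  have hvS : ∀ n, v n ∈ S := fun n k _ => abs_le.1 (habs (gex k) n)
  obtain ⟨L, _, ψ, hψmono, hconv⟩ := hseq hvS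
  have hpt : ∀ k, Tendsto (fun n => gex k (z (ψ n))) atTop (𝓝 (L k)) :=
    fun k => tendsto_pi_nhds.1 hconv k
  -- convergence of every functional along the subsequence
  have hCauchy : ∀ h : StrongDual ℝ X, ∃ t, Tendsto (fun n => h (z (ψ n))) atTop (𝓝 t) := by
    intro h
    have hcs : CauchySeq (fun n => h (z (ψ n))) := by
      rw [Metric.cauchySeq_iff]
      intro ε hε
      set ε' : ℝ := ε / (8 * (C + 1)) with hε'def
      have hε'pos : 0 < ε' := by positivity
      set hZr : StrongDual ℝ ↥Z := h.comp Z.subtypeL with hZrdef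
      obtain ⟨k, hk⟩ := Metric.denseRange_iff.1 hζ hZr ε' hε'pos
      have hknorm : ‖hZr - ζ k‖ < ε' := by
        rw [← dist_eq_norm (a := hZr)]
        exact hk
      obtain ⟨e, he, hen⟩ := exists_extension_norm_eq Z (hZr - ζ k)
      set w : StrongDual ℝ X := h - gex k - e with hwdef
      have hwZ : ∀ u ∈ Z, w u = 0 := by
        intro u hu
        have h1 : gex k u = ζ k ⟨u, hu⟩ := hgex k ⟨u, hu⟩
        have h2 : e u = h u - ζ k ⟨u, hu⟩ := by
          have := he ⟨u, hu⟩
          simpa [hZrdef, ContinuousLinearMap.sub_apply] using this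
        simp only [hwdef, ContinuousLinearMap.sub_apply]
        rw [h1, h2]
        ring
      have hw0 : Tendsto (fun n => w (z n)) atTop (𝓝 0) := keyclaim w hwZ
      have hebd : ∀ n, |e (z n)| ≤ ε' * C := by
        intro n
        calc |e (z n)| ≤ ‖e‖ * C := habs e n
          _ = ‖hZr - ζ k‖ * C := by rw [hen]
          _ ≤ ε' * C := mul_le_mul_of_nonneg_right hknorm.le hC0
      -- a_n := gex k (z (ψ n)) is Cauchy
      have hacs : CauchySeq (fun n => gex k (z (ψ n))) := (hpt k).cauchySeq
      rw [Metric.cauchySeq_iff] at hacs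
      obtain ⟨N₁, hN₁⟩ := hacs (ε / 4) (by positivity)
      have hw0' : Tendsto (fun n => w (z (ψ n))) atTop (𝓝 0) :=
        hw0.comp hψmono.tendsto_atTop
      rw [Metric.tendsto_atTop] at hw0'
      obtain ⟨N₂, hN₂⟩ := hw0' ε' hε'pos
      refine ⟨max N₁ N₂, fun m hm n hn => ?_⟩
      have hdecomp : ∀ j, h (z j) = gex k (z j) + e (z j) + w (z j) := by
        intro j
        simp only [hwdef, ContinuousLinearMap.sub_apply]
        ring
      have hwm : |w (z (ψ m))| < ε' := by
        have := hN₂ m (le_trans (le_max_right _ _) hm)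
        rwa [Real.dist_eq, sub_zero] at this
      have hwn : |w (z (ψ n))| < ε' := by
        have := hN₂ n (le_trans (le_max_right _ _) hn)
        rwa [Real.dist_eq, sub_zero] at this
      have ham : dist (gex k (z (ψ m))) (gex k (z (ψ n))) < ε / 4 :=
        hN₁ m (le_trans (le_max_left _ _) hm) n (le_trans (le_max_left _ _) hn)
      rw [Real.dist_eq] at ham ⊢
      rw [hdecomp (ψ m), hdecomp (ψ n)]
      have hεC : ε' * (2 * C + 2) ≤ ε / 4 := by
        rw [hε'def]
        rw [div_mul_eq_mul_div, div_le_div_iff₀ (by positivity) (by norm_num)]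
        nlinarith
      have hcalc : |gex k (z (ψ m)) + e (z (ψ m)) + w (z (ψ m)) -
          (gex k (z (ψ n)) + e (z (ψ n)) + w (z (ψ n)))| ≤
          |gex k (z (ψ m)) - gex k (z (ψ n))| + |e (z (ψ m))| + |e (z (ψ n))| +
          |w (z (ψ m))| + |w (z (ψ n))| := by
        have h1 := abs_add_le (gex k (z (ψ m)) - gex k (z (ψ n)))
          (e (z (ψ m)) - e (z (ψ n)) + (w (z (ψ m)) - w (z (ψ n))))
        have h2 := abs_add_le (e (z (ψ m)) - e (z (ψ n))) (w (z (ψ m)) - w (z (ψ n)))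
        have h3 := abs_sub (e (z (ψ m))) (e (z (ψ n)))
        have h4 := abs_sub (w (z (ψ m))) (w (z (ψ n)))
        have heq : gex k (z (ψ m)) + e (z (ψ m)) + w (z (ψ m)) -
            (gex k (z (ψ n)) + e (z (ψ n)) + w (z (ψ n))) =
            gex k (z (ψ m)) - gex k (z (ψ n)) +
            (e (z (ψ m)) - e (z (ψ n)) + (w (z (ψ m)) - w (z (ψ n)))) := by ring
        rw [heq]
        linarith
      have hebd1 := hebd (ψ m)
      have hebd2 := hebd (ψ n)
      have : |gex k (z (ψ m)) - gex k (z (ψ n))| + |e (z (ψ m))| + |e (z (ψ n))| +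
          |w (z (ψ m))| + |w (z (ψ n))| < ε / 4 + (ε' * C + ε' * C + ε' + ε') := by
        linarith
      have hfin : ε' * C + ε' * C + ε' + ε' ≤ ε / 4 := by
        have : ε' * C + ε' * C + ε' + ε' = ε' * (2 * C + 2) := by ring
        linarith [hεC, this.le]
      calc |gex k (z (ψ m)) + e (z (ψ m)) + w (z (ψ m)) -
          (gex k (z (ψ n)) + e (z (ψ n)) + w (z (ψ n)))| ≤
          |gex k (z (ψ m)) - gex k (z (ψ n))| + |e (z (ψ m))| + |e (z (ψ n))| +
          |w (z (ψ m))| + |w (z (ψ n))| := hcalc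
        _ < ε / 4 + (ε' * C + ε' * C + ε' + ε') := this
        _ ≤ ε / 4 + ε / 4 := by linarith
        _ < ε := by linarith
    exact cauchySeq_tendsto_of_complete hcs
  choose ℓ hℓ using hCauchy
  have hadd : ∀ f g : StrongDual ℝ X, ℓ (f + g) = ℓ f + ℓ g := by
    intro f g
    refine tendsto_nhds_unique (hℓ (f + g)) ?_
    have := (hℓ f).add (hℓ g)
    simpa using this
  have hsmul : ∀ (c : ℝ) (f : StrongDual ℝ X), ℓ (c • f) = c * ℓ f := by
    intro c f
    refine tendsto_nhds_unique (hℓ (c • f)) ?_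
    have := (hℓ f).const_mul c
    simpa using this
  have hbdd : ∀ f : StrongDual ℝ X, |ℓ f| ≤ C * ‖f‖ := by
    intro f
    have hmem : ∀ n, f (z (ψ n)) ∈ Set.Icc (-(‖f‖ * C)) (‖f‖ * C) :=
      fun n => abs_le.1 (habs f (ψ n))
    have := isClosed_Icc.mem_of_tendsto (hℓ f) (Eventually.of_forall hmem)
    have h2 : |ℓ f| ≤ ‖f‖ * C := abs_le.2 ⟨this.1, this.2⟩
    linarith [h2, mul_comm ‖f‖ C]
  have hkill : ∀ f : StrongDual ℝ X, (∀ u ∈ Y, f u = 0) → ℓ f = 0 := by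
    intro f hf
    exact tendsto_nhds_unique (hℓ f) ((hnull f hf).comp hψmono.tendsto_atTop)
  obtain ⟨c, _, hc⟩ := aux_repr Y hrefl ℓ hadd hsmul hbdd hkill
  refine ⟨c, ψ, hψmono, fun h => ?_⟩
  rw [← hc h]
  exact hℓ h

end Aux

set_option synthInstance.maxHeartbeats 1000000 in
set_option maxHeartbeats 2000000 in
/-- if `Y` is a reflexive (closed) subspace of `X` and the quotient `X/Y`
has the `p`-sequentially Right* property, then so does `X`. -/
theorem stmt13 {p : ℝ≥0∞} (hp : 1 ≤ p) {X : Type*} [NormedAddCommGroup X] [NormedSpace ℝ X]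
    [CompleteSpace X] (Y : Submodule ℝ X) [IsClosed (Y : Set X)]
    (hrefl : Function.Surjective (NormedSpace.inclusionInDoubleDual ℝ Y))
    (h : PSRStar p (X ⧸ Y)) :
    PSRStar p X := by
  intro K hK
  -- the quotient map as a continuous linear map
  let Q : X →L[ℝ] X ⧸ Y := LinearMap.mkContinuous Y.mkQ 1 (fun x => by
    simpa [one_mul] using Submodule.Quotient.norm_mk_le (S := Y) x)
  have hQ : ∀ x : X, Q x = Submodule.Quotient.mk x := fun x => rfl
  obtain ⟨CK, hCK⟩ := isBounded_iff_forall_norm_le.1 hK.1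
  -- the image of K under Q is a p-Right* set in X ⧸ Y
  have hQK : IsPRightStarSet p (Q '' K) := by
    constructor
    · rw [isBounded_iff_forall_norm_le]
      refine ⟨CK, ?_⟩
      rintro _ ⟨a, haK, rfl⟩
      calc ‖Q a‖ ≤ ‖a‖ := by
            rw [hQ a]; exact Submodule.Quotient.norm_mk_le (S := Y) a
        _ ≤ CK := hCK a haK
    · intro g hg
      have hgQ : PRightNull p (fun n => adjointOp Q (g n)) :=
        ⟨aux_wps_comp (adjointOp Q) hg.1, aux_dp_comp (adjointOp Q) hg.2⟩
      have hsup := hK.2 _ hgQ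
      refine squeeze_zero (fun n => Real.iSup_nonneg fun b => abs_nonneg _)
        (fun n => ?_) hsup
      refine Real.iSup_le ?_ (Real.iSup_nonneg fun a => abs_nonneg _)
      rintro ⟨b, a, haK, rfl⟩
      exact le_ciSup (aux_bddAbove hK.1 (adjointOp Q (g n))) (⟨a, haK⟩ : K)
  -- use the p-(SR*) property of the quotient
  have hQKw := h _ hQK
  intro x hx
  obtain ⟨aq, φ, hφ, hconv⟩ := hQKw (fun n => Q (x n)) (fun n => ⟨x n, hx n, rfl⟩)
  obtain ⟨b, hb⟩ := Submodule.Quotient.mk_surjective Y aq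
  set z : ℕ → X := fun n => x (φ n) - b with hzdef
  have hzbd : ∀ n, ‖z n‖ ≤ CK + ‖b‖ := by
    intro n
    calc ‖x (φ n) - b‖ ≤ ‖x (φ n)‖ + ‖b‖ := norm_sub_le _ _
      _ ≤ CK + ‖b‖ := add_le_add_left (hCK _ (hx (φ n))) _
  have hnull : ∀ w : StrongDual ℝ X, (∀ u ∈ Y, w u = 0) →
      Tendsto (fun n => w (z n)) atTop (𝓝 0) := by
    intro w hw
    have hker : Y ≤ LinearMap.ker (w : X →ₗ[ℝ] ℝ) := by
      intro u hu
      simpa [LinearMap.mem_ker] using hw u hu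
    set l : X ⧸ Y →ₗ[ℝ] ℝ := Y.liftQ (w : X →ₗ[ℝ] ℝ) hker with hldef
    have hl : ∀ q : X ⧸ Y, ‖l q‖ ≤ ‖w‖ * ‖q‖ := by
      intro q
      refine le_of_forall_pos_lt_add fun ε hε => ?_
      set δ : ℝ := ε / (‖w‖ + 1) with hδdef
      have hδpos : 0 < δ := by positivity
      obtain ⟨m, hm, hmn⟩ := Submodule.Quotient.norm_mk_lt q hδpos
      have h1 : l q = w m := by
        rw [← hm]
        exact Submodule.liftQ_apply _ _ m
      rw [h1]
      have h2 : ‖w m‖ ≤ ‖w‖ * ‖m‖ := w.le_opNorm m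
      have h3 : ‖w‖ * ‖m‖ ≤ ‖w‖ * (‖q‖ + δ) :=
        mul_le_mul_of_nonneg_left hmn.le (norm_nonneg w)
      have h4 : ‖w‖ * δ < ε := by
        have h5 : ‖w‖ * δ < (‖w‖ + 1) * δ :=
          mul_lt_mul_of_pos_right (lt_add_one ‖w‖) hδpos
        have h6 : (‖w‖ + 1) * δ = ε := by
          rw [hδdef]
          field_simp
        linarith
      calc ‖w m‖ ≤ ‖w‖ * ‖m‖ := h2
        _ ≤ ‖w‖ * (‖q‖ + δ) := h3
        _ = ‖w‖ * ‖q‖ + ‖w‖ * δ := by ring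
        _ < ‖w‖ * ‖q‖ + ε := by linarith
    set gbar : StrongDual ℝ (X ⧸ Y) := l.mkContinuous ‖w‖ hl with hgbardef
    have hgbarQ : ∀ u : X, gbar (Q u) = w u := by
      intro u
      show l (Submodule.Quotient.mk u) = w u
      exact Submodule.liftQ_apply _ _ u
    have heq : (fun n => w (z n)) = fun n => gbar (Q (x (φ n))) - gbar aq := by
      funext n
      rw [← hb]
      show w (x (φ n) - b) = gbar (Q (x (φ n))) - gbar (Q b)
      rw [hgbarQ, hgbarQ, map_sub]
    rw [heq]
    have := (hconv gbar).sub_const (gbar aq)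
    simpa using this
  obtain ⟨c, ψ, hψ, hcc⟩ := aux_main_lift Y ‹IsClosed (Y : Set X)› hrefl z hzbd hnull
  refine ⟨c + b, φ ∘ ψ, hφ.comp hψ, fun f => ?_⟩
  have h1 : ∀ n, f (x (φ (ψ n))) = f (z (ψ n)) + f b := by
    intro n
    rw [hzdef]
    simp [map_sub]
  have h2 := (hcc f).add_const (f b)
  have h3 : (fun n => f (x ((φ ∘ ψ) n))) = fun n => f (z (ψ n)) + f b := funext h1
  rw [h3, map_add]
  exact h2
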